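/- arXiv:2308.01059 — 2 statements merged into one kernel-verified Lean document; each statement's English description precedes it below -/
import Mathlib

section
/- Let T be a nondegenerate simplex in ℝ^d with diameter h_T and F one of its faces. For any polynomial φ of degree ≤ p on T, ‖φ‖_{L²(F)} ≤ C √(|F|/|T|) ‖φ‖_{L²(T)}, with C depending only on d and p. -/
open MeasureTheory MvPolynomial Pointwise
open scoped RealInnerProductSpace ENNReal

lemma aeval_eq_eval' {d : ℕ} (x : Fin d → ℝ) (Q : MvPolynomial (Fin d) ℝ) :
    (MvPolynomial.aeval x) Q = MvPolynomial.eval x Q := by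
  rfl

lemma mv_eq_zero_of_ball {d : ℕ} (Q : MvPolynomial (Fin d) ℝ)
    (x₀ : EuclideanSpace ℝ (Fin d)) (ε : ℝ) (hε : 0 < ε)
    (h : ∀ x : EuclideanSpace ℝ (Fin d), dist x x₀ < ε →
      MvPolynomial.eval (fun i => x i) Q = 0) : Q = 0 := by
  apply MvPolynomial.funext
  intro z
  simp only [map_zero]
  set w : EuclideanSpace ℝ (Fin d) := WithLp.toLp 2 (fun i => z i - x₀ i) with hw
  set q : Polynomial ℝ :=
    MvPolynomial.aeval (fun i => Polynomial.C (x₀ i) + Polynomial.C (w i) * Polynomial.X) Q with hq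
  have hqe : ∀ t : ℝ, q.eval t = MvPolynomial.eval (fun i => (x₀ + t • w) i) Q := by
    intro t
    have key := congrFun (congrArg (fun f => f.toFun)
      (MvPolynomial.comp_aeval
        (fun i => Polynomial.C (x₀ i) + Polynomial.C (w i) * Polynomial.X)
        (Polynomial.aeval t))) Q
    simp only [AlgHom.toFun_eq_coe, AlgHom.coe_comp, Function.comp_apply] at key
    have h2 : (Polynomial.aeval t) q = q.eval t := rfl
    have harg : (fun i => (Polynomial.aeval t)
        (Polynomial.C (x₀ i) + Polynomial.C (w i) * Polynomial.X))
        = fun i => (x₀ + t • w) i := by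
      funext i
      simp only [map_add, map_mul, Polynomial.aeval_C, Polynomial.aeval_X,
        Algebra.algebraMap_self_apply, PiLp.add_apply, PiLp.smul_apply, smul_eq_mul]
      ring
    rw [← h2, key, harg, aeval_eq_eval']
  have hδ : (0:ℝ) < ε / (‖w‖ + 1) := by positivity
  have hroots : q = 0 := by
    apply Polynomial.eq_zero_of_infinite_isRoot
    apply Set.Infinite.mono (s := Set.Ioo (-(ε / (‖w‖ + 1))) (ε / (‖w‖ + 1)))
    · intro t ht
      have h1 : |t| < ε / (‖w‖ + 1) := by
        rw [abs_lt]; exact ⟨ht.1, ht.2⟩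
      have hdist : dist (x₀ + t • w) x₀ < ε := by
        rw [dist_eq_norm, add_sub_cancel_left, norm_smul, Real.norm_eq_abs]
        calc |t| * ‖w‖ ≤ |t| * (‖w‖ + 1) := by
              apply mul_le_mul_of_nonneg_left (by linarith) (abs_nonneg t)
          _ < ε / (‖w‖ + 1) * (‖w‖ + 1) := by
              apply mul_lt_mul_of_pos_right h1 (by positivity)
          _ = ε := by field_simp
      show q.IsRoot t
      rw [Polynomial.IsRoot, hqe t, h _ hdist]
    · exact Set.Ioo_infinite (neg_lt_self hδ)
  have h3 := hqe 1
  rw [hroots] at h3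
  simp only [Polynomial.eval_zero] at h3
  rw [show (fun i => (x₀ + (1:ℝ) • w) i) = z from
    funext fun i => by simp [PiLp.add_apply, PiLp.smul_apply, hw]] at h3
  exact h3.symm

lemma totalDegree_bind₁_le {d e : ℕ} (g : Fin d → MvPolynomial (Fin e) ℝ)
    (hg : ∀ i, (g i).totalDegree ≤ 1) (P : MvPolynomial (Fin d) ℝ) :
    (MvPolynomial.bind₁ g P).totalDegree ≤ P.totalDegree := by
  conv_lhs => rw [P.as_sum]
  rw [map_sum]
  apply le_trans (MvPolynomial.totalDegree_finset_sum _ _)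
  apply Finset.sup_le
  intro s hs
  rw [MvPolynomial.bind₁_monomial]
  calc (C (coeff s P) * ∏ i ∈ s.support, g i ^ s i).totalDegree
      ≤ (C (coeff s P)).totalDegree + (∏ i ∈ s.support, g i ^ s i).totalDegree :=
        totalDegree_mul _ _
    _ ≤ 0 + ∑ i ∈ s.support, (g i ^ s i).totalDegree := by
        gcongr
        · exact le_of_eq (totalDegree_C _)
        · exact totalDegree_finset_prod _ _
    _ ≤ ∑ i ∈ s.support, s i * 1 := by
        rw [zero_add]
        apply Finset.sum_le_sum
        intro i _
        calc (g i ^ s i).totalDegree ≤ s i * (g i).totalDegree := totalDegree_pow _ _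
          _ ≤ s i * 1 := Nat.mul_le_mul_left _ (hg i)
    _ = s.sum fun _ e => e := by simp [Finsupp.sum]
    _ ≤ P.totalDegree := le_totalDegree hs

variable {m : ℕ} {G : Type*} [NormedAddCommGroup G] [NormedSpace ℝ G]

noncomputable def refv (d : ℕ) : Fin (d+1) → EuclideanSpace ℝ (Fin d) :=
  Fin.cons 0 (fun i => EuclideanSpace.single i 1)

noncomputable def refS (d : ℕ) : Set (EuclideanSpace ℝ (Fin d)) :=
  convexHull ℝ (Set.range (refv d))

noncomputable def simplexMapL (w : Fin (m+1) → G) : EuclideanSpace ℝ (Fin m) →ₗ[ℝ] G where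
  toFun y := ∑ j, y j • (w j.succ - w 0)
  map_add' a b := by
    simp only [PiLp.add_apply, add_smul]
    rw [Finset.sum_add_distrib]
  map_smul' c a := by
    simp only [PiLp.smul_apply, smul_eq_mul, RingHom.id_apply, ← smul_smul]
    rw [← Finset.smul_sum]

noncomputable def simplexMap (w : Fin (m+1) → G) : EuclideanSpace ℝ (Fin m) →ᵃ[ℝ] G where
  toFun y := w 0 + simplexMapL w y
  linear := simplexMapL w
  map_vadd' p v := by
    simp only [vadd_eq_add, map_add]
    abel

lemma simplexMap_apply (w : Fin (m+1) → G) (y : EuclideanSpace ℝ (Fin m)) :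
    simplexMap w y = w 0 + ∑ j, y j • (w j.succ - w 0) := rfl

lemma simplexMapL_single (w : Fin (m+1) → G) (i : Fin m) :
    simplexMapL w (EuclideanSpace.single i 1) = w i.succ - w 0 := by
  show (∑ j, EuclideanSpace.single i (1:ℝ) j • (w j.succ - w 0)) = _
  rw [Finset.sum_eq_single i]
  · simp [EuclideanSpace.single_apply]
  · intro b _ hb
    simp [EuclideanSpace.single_apply, if_neg hb]
  · simp

lemma simplexMap_vertex (w : Fin (m+1) → G) (j : Fin (m+1)) :
    simplexMap w (refv m j) = w j := by
  induction j using Fin.cases with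
  | zero => simp [simplexMap_apply, refv]
  | succ i =>
    show w 0 + simplexMapL w (refv m i.succ) = w i.succ
    have : refv m i.succ = EuclideanSpace.single i 1 := by simp [refv]
    rw [this, simplexMapL_single]
    abel

lemma simplexMap_image (w : Fin (m+1) → G) :
    simplexMap w '' refS m = convexHull ℝ (Set.range w) := by
  rw [refS, AffineMap.image_convexHull, ← Set.range_comp]
  exact congrArg (convexHull ℝ) (congrArg Set.range (_root_.funext (simplexMap_vertex w)))

lemma refv_affineIndependent (d : ℕ) : AffineIndependent ℝ (refv d) := by
  rw [affineIndependent_iff_linearIndependent_vsub ℝ (refv d) 0]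
  have hli : LinearIndependent ℝ (fun i : Fin d => EuclideanSpace.single i (1:ℝ)) := by
    have := (EuclideanSpace.basisFun (Fin d) ℝ).toBasis.linearIndependent
    convert this using 1
    funext i
    simp [EuclideanSpace.basisFun_apply]
    all_goals rfl
  have he : LinearIndependent ℝ
      (fun i : {x : Fin (d+1) // x ≠ 0} => refv d i -ᵥ refv d 0) := by
    let e : Fin d ≃ {x : Fin (d+1) // x ≠ 0} :=
      { toFun := fun j => ⟨j.succ, Fin.succ_ne_zero j⟩
        invFun := fun i => (i : Fin (d+1)).pred i.2
        left_inv := fun j => by simp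
        right_inv := fun i => by simp }
    rw [← linearIndependent_equiv e]
    convert hli using 1
    funext j
    show refv d (j.succ) -ᵥ refv d 0 = _
    simp [refv, vsub_eq_sub]
  exact he

lemma refS_compact (d : ℕ) : IsCompact (refS d) :=
  (Set.finite_range (refv d)).isCompact_convexHull ℝ

lemma refS_nonempty (d : ℕ) : (refS d).Nonempty :=
  ⟨refv d 0, subset_convexHull ℝ _ ⟨0, rfl⟩⟩

lemma refS_interior_nonempty (d : ℕ) : (interior (refS d)).Nonempty := by
  unfold refS
  rw [(convex_convexHull ℝ _).interior_nonempty_iff_affineSpan_eq_top,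
    affineSpan_convexHull]
  rw [(refv_affineIndependent d).affineSpan_eq_top_iff_card_eq_finrank_add_one]
  simp [finrank_euclideanSpace_fin]

lemma refS_volume_pos (d : ℕ) : 0 < volume (refS d) :=
  lt_of_lt_of_le (IsOpen.measure_pos volume isOpen_interior (refS_interior_nonempty d))
    (measure_mono interior_subset)

lemma refS_volume_lt_top (d : ℕ) : volume (refS d) < ⊤ :=
  (refS_compact d).measure_lt_top

lemma eval_continuous' {d : ℕ} (R : MvPolynomial (Fin d) ℝ) :
    Continuous fun x : EuclideanSpace ℝ (Fin d) => MvPolynomial.eval (fun i => x i) R :=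
  (MvPolynomial.continuous_eval R).comp
    (continuous_pi fun i => (EuclideanSpace.proj i).continuous)

lemma ref_integral_pos {d : ℕ} (Q : MvPolynomial (Fin d) ℝ) (hQ : Q ≠ 0) :
    0 < ∫ x in refS d, (MvPolynomial.eval (fun i => x i) Q)^2 := by
  set f : EuclideanSpace ℝ (Fin d) → ℝ := fun x => (MvPolynomial.eval (fun i => x i) Q)^2
    with hf
  have hfc : Continuous f := ((eval_continuous' Q).pow 2)
  rw [MeasureTheory.setIntegral_pos_iff_support_of_nonneg_ae]
  · -- 0 < volume (support f ∩ refS d)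
    obtain ⟨x₀, hx₀⟩ := refS_interior_nonempty d
    obtain ⟨ε, hε, hball⟩ := Metric.isOpen_iff.1 isOpen_interior x₀ hx₀
    have hex : ∃ x : EuclideanSpace ℝ (Fin d), dist x x₀ < ε ∧
        MvPolynomial.eval (fun i => x i) Q ≠ 0 := by
      by_contra hcon
      push_neg at hcon
      exact hQ (mv_eq_zero_of_ball Q x₀ ε hε hcon)
    obtain ⟨x, hx, hxne⟩ := hex
    have hV : IsOpen (Metric.ball x₀ ε ∩ {y | f y ≠ 0}) :=
      Metric.isOpen_ball.inter (isOpen_ne.preimage hfc)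
    have hVne : (Metric.ball x₀ ε ∩ {y | f y ≠ 0}).Nonempty :=
      ⟨x, Metric.mem_ball.2 hx, by simp [hf, pow_eq_zero_iff, hxne]⟩
    calc (0:ENNReal) < volume (Metric.ball x₀ ε ∩ {y | f y ≠ 0}) :=
          IsOpen.measure_pos volume hV hVne
      _ ≤ volume (Function.support f ∩ refS d) := by
          apply measure_mono
          rintro y ⟨hy1, hy2⟩
          exact ⟨hy2, interior_subset (hball hy1)⟩
  · exact Filter.Eventually.of_forall fun y => sq_nonneg _
  · exact hfc.continuousOn.integrableOn_compact (refS_compact d)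

lemma ref_bound (d p : ℕ) : ∃ C : ℝ, 0 < C ∧
    ∀ Q : MvPolynomial (Fin d) ℝ, Q.totalDegree ≤ p → ∀ y ∈ refS d,
      (MvPolynomial.eval (fun i => y i) Q)^2
        ≤ C * ∫ x in refS d, (MvPolynomial.eval (fun i => x i) Q)^2 := by
  classical
  set V := MvPolynomial.restrictTotalDegree (Fin d) ℝ p with hV
  haveI : FiniteDimensional ℝ V := inferInstance
  haveI : Module.Free ℝ V := Module.Free.of_divisionRing ℝ V
  set n := Module.finrank ℝ V with hn
  set b : Module.Basis (Fin n) ℝ V := Module.finBasis ℝ V with hb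
  set S : Set (Fin n → ℝ) := Metric.sphere 0 1 with hS
  set h : Fin n → EuclideanSpace ℝ (Fin d) → ℝ :=
    fun i y => MvPolynomial.eval (fun i' => y i') ((b i : V) : MvPolynomial (Fin d) ℝ) with hh
  have hexp : ∀ (c : Fin n → ℝ) (y : EuclideanSpace ℝ (Fin d)),
      MvPolynomial.eval (fun i => y i) ((b.equivFun.symm c : V) : MvPolynomial (Fin d) ℝ)
        = ∑ i, c i * h i y := by
    intro c y
    rw [Module.Basis.equivFun_symm_apply]
    have : ((∑ i, c i • b i : V) : MvPolynomial (Fin d) ℝ)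
        = ∑ i, c i • ((b i : V) : MvPolynomial (Fin d) ℝ) := by
      push_cast
      rfl
    rw [this, map_sum]
    congr 1
    funext i
    rw [MvPolynomial.smul_eval]
  have hint : ∀ i j, IntegrableOn (fun y => h i y * h j y) (refS d) volume := fun i j =>
    (((eval_continuous' _).mul (eval_continuous' _)).continuousOn).integrableOn_compact
      (refS_compact d)
  set a : Fin n → Fin n → ℝ := fun i j => ∫ y in refS d, h i y * h j y with ha
  set f : (Fin n → ℝ) → ℝ :=
    fun c => ∫ y in refS d,
      (MvPolynomial.eval (fun i => y i) ((b.equivFun.symm c : V) : MvPolynomial (Fin d) ℝ))^2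
    with hf
  have hf_eq : ∀ c, f c = ∑ i, ∑ j, (c i * c j) * a i j := by
    intro c
    have e1 : ∀ y : EuclideanSpace ℝ (Fin d),
        (MvPolynomial.eval (fun i => y i) ((b.equivFun.symm c : V) : MvPolynomial (Fin d) ℝ))^2
        = ∑ i, ∑ j, (c i * c j) * (h i y * h j y) := by
      intro y
      rw [hexp, sq, Finset.sum_mul_sum]
      apply Finset.sum_congr rfl
      intro i _
      apply Finset.sum_congr rfl
      intro j _
      ring
    rw [hf]
    simp only [e1]
    rw [MeasureTheory.integral_finset_sum]
    · apply Finset.sum_congr rfl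
      intro i _
      rw [MeasureTheory.integral_finset_sum]
      · apply Finset.sum_congr rfl
        intro j _
        rw [MeasureTheory.integral_const_mul]
      · intro j _
        exact ((hint i j).const_mul _)
    · intro i _
      apply MeasureTheory.integrable_finset_sum
      intro j _
      exact ((hint i j).const_mul _)
  have hf_cont : Continuous f := by
    have : Continuous fun c : Fin n → ℝ => ∑ i, ∑ j, (c i * c j) * a i j := by
      apply continuous_finset_sum
      intro i _
      apply continuous_finset_sum
      intro j _
      exact ((continuous_apply i).mul (continuous_apply j)).mul continuous_const
    convert this using 1
    funext c
    exact hf_eq c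
  set g : (Fin n → ℝ) × EuclideanSpace ℝ (Fin d) → ℝ :=
    fun q => (∑ i, q.1 i * h i q.2)^2 with hg
  have hg_cont : Continuous g := by
    apply Continuous.pow
    apply continuous_finset_sum
    intro i _
    exact ((continuous_apply i).comp continuous_fst).mul
      ((eval_continuous' _).comp continuous_snd)
  rcases Set.eq_empty_or_nonempty S with hSe | hSne
  · -- sphere empty: all polynomials of degree ≤ p are zero
    refine ⟨1, one_pos, fun Q hQ y _ => ?_⟩
    have hQv : Q = 0 := by
      by_contra hne
      set Qv : V := ⟨Q, (MvPolynomial.mem_restrictTotalDegree _ _ _).2 hQ⟩ with hQv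
      have h1 : b.equivFun Qv ≠ 0 := by
        intro hc
        apply hne
        have h2 : Qv = 0 := (LinearEquiv.map_eq_zero_iff b.equivFun).1 hc
        exact congrArg (Subtype.val) h2
      have : ‖b.equivFun Qv‖⁻¹ • b.equivFun Qv ∈ S := by
        rw [hS, mem_sphere_zero_iff_norm]
        exact norm_smul_inv_norm h1
      rw [hSe] at this
      exact this
    rw [hQv]
    simp
  · obtain ⟨c₀w, hc₀w, hmin⟩ :=
      (isCompact_sphere (0 : Fin n → ℝ) 1).exists_isMinOn hSne hf_cont.continuousOn
    obtain ⟨q₁, hq₁, hmax⟩ :=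
      ((isCompact_sphere (0 : Fin n → ℝ) 1).prod (refS_compact d)).exists_isMaxOn
        (hSne.prod (refS_nonempty d)) hg_cont.continuousOn
    set c₀ := f c₀w with hc₀
    set c₁ := g q₁ with hc₁
    have hc₀pos : 0 < c₀ := by
      have h1 : c₀w ≠ 0 := by
        intro hz
        have := mem_sphere_zero_iff_norm.1 hc₀w
        rw [hz, norm_zero] at this; norm_num at this
      have h2 : ((b.equivFun.symm c₀w : V) : MvPolynomial (Fin d) ℝ) ≠ 0 := by
        intro hz
        apply h1
        have h4 : (b.equivFun.symm c₀w : V) = 0 := Subtype.ext hz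
        have h3 := congrArg b.equivFun h4
        rw [LinearEquiv.apply_symm_apply, map_zero] at h3
        exact h3
      exact ref_integral_pos _ h2
    refine ⟨max 1 (c₁ / c₀), lt_of_lt_of_le one_pos (le_max_left _ _), fun Q hQ y hy => ?_⟩
    by_cases hQ0 : Q = 0
    · rw [hQ0]; simp
    set Qv : V := ⟨Q, (MvPolynomial.mem_restrictTotalDegree _ _ _).2 hQ⟩ with hQv
    set cv := b.equivFun Qv with hcv
    have hcvne : cv ≠ 0 := by
      intro hc
      have h2 : Qv = 0 := (LinearEquiv.map_eq_zero_iff b.equivFun).1 hc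
      exact hQ0 (congrArg (Subtype.val) h2)
    set r := ‖cv‖ with hr
    have hrpos : 0 < r := norm_pos_iff.2 hcvne
    set w := r⁻¹ • cv with hww
    have hwS : w ∈ S := by
      rw [mem_sphere_zero_iff_norm]
      exact norm_smul_inv_norm hcvne
    have hkey : ∀ y' : EuclideanSpace ℝ (Fin d),
        MvPolynomial.eval (fun i => y' i) Q = r * (∑ i, w i * h i y') := by
      intro y'
      rw [← hexp]
      have e1 : (b.equivFun.symm w : V) = r⁻¹ • Qv := by
        rw [hww, LinearEquiv.map_smul, hcv, LinearEquiv.symm_apply_apply]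
      rw [e1]
      have e2 : ((r⁻¹ • Qv : V) : MvPolynomial (Fin d) ℝ) = r⁻¹ • Q := rfl
      rw [e2, MvPolynomial.smul_eval, ← mul_assoc,
        mul_inv_cancel₀ (ne_of_gt hrpos), one_mul]
    have hIQ : (∫ x in refS d, (MvPolynomial.eval (fun i => x i) Q)^2)
        = r^2 * f w := by
      have hfw : f w = ∫ x in refS d,
          (MvPolynomial.eval (fun i => x i) ((b.equivFun.symm w : V) : MvPolynomial (Fin d) ℝ))^2 :=
        rfl
      rw [hfw, ← MeasureTheory.integral_const_mul]
      apply MeasureTheory.setIntegral_congr_fun (refS_compact d).measurableSet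
      intro x _
      show (MvPolynomial.eval (fun i => x i) Q)^2
          = r^2 * (MvPolynomial.eval (fun i => x i)
              ((b.equivFun.symm w : V) : MvPolynomial (Fin d) ℝ))^2
      rw [hexp, hkey x]
      ring
    have hgle : g (w, y) ≤ c₁ := hmax (Set.mk_mem_prod hwS hy)
    have hfge : c₀ ≤ f w := hmin hwS
    have hc₁nn : 0 ≤ c₁ := le_trans (sq_nonneg _) hgle
    calc (MvPolynomial.eval (fun i => y i) Q)^2 = r^2 * g (w, y) := by
          rw [hkey y, hg]; ring
      _ ≤ r^2 * c₁ := by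
          apply mul_le_mul_of_nonneg_left hgle (sq_nonneg r)
      _ = (c₁ / c₀) * (r^2 * c₀) := by field_simp
      _ ≤ (c₁ / c₀) * (r^2 * f w) := by
          apply mul_le_mul_of_nonneg_left _ (div_nonneg hc₁nn (le_of_lt hc₀pos))
          exact mul_le_mul_of_nonneg_left hfge (sq_nonneg r)
      _ ≤ (max 1 (c₁ / c₀)) * (r^2 * f w) := by
          apply mul_le_mul_of_nonneg_right (le_max_right _ _)
          have : 0 ≤ f w := le_trans (le_of_lt hc₀pos) hfge
          positivity
      _ = (max 1 (c₁ / c₀)) * ∫ x in refS d, (MvPolynomial.eval (fun i => x i) Q)^2 := by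
          rw [hIQ]

lemma vsub_linearIndependent {d : ℕ} (v : Fin (d+1) → EuclideanSpace ℝ (Fin d))
    (hv : AffineIndependent ℝ v) :
    LinearIndependent ℝ (fun j : Fin d => v j.succ - v 0) := by
  rw [affineIndependent_iff_linearIndependent_vsub ℝ v 0] at hv
  let e : Fin d ≃ {x : Fin (d+1) // x ≠ 0} :=
    { toFun := fun j => ⟨j.succ, Fin.succ_ne_zero j⟩
      invFun := fun i => (i : Fin (d+1)).pred i.2
      left_inv := fun j => by simp
      right_inv := fun i => by simp }
  have := (linearIndependent_equiv e (f := fun i : {x : Fin (d+1) // x ≠ 0} =>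
    v i -ᵥ v 0)).2 hv
  convert this using 1
  all_goals rfl

lemma simplexMapL_det_ne_zero {d : ℕ} (v : Fin (d+1) → EuclideanSpace ℝ (Fin d))
    (hv : AffineIndependent ℝ v) : LinearMap.det (simplexMapL v) ≠ 0 := by
  have hli := vsub_linearIndependent v hv
  have hinj : Function.Injective (simplexMapL v) := by
    rw [← LinearMap.ker_eq_bot, LinearMap.ker_eq_bot']
    intro y hy
    have h0 : ∑ j, y j • (v j.succ - v 0) = 0 := hy
    have := Fintype.linearIndependent_iff.1 hli (fun j => y j) h0
    ext i
    exact this i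
  have hsurj : Function.Surjective (simplexMapL v) :=
    (LinearMap.injective_iff_surjective).1 hinj
  let e : EuclideanSpace ℝ (Fin d) ≃ₗ[ℝ] EuclideanSpace ℝ (Fin d) :=
    LinearEquiv.ofBijective (simplexMapL v) ⟨hinj, hsurj⟩
  have : IsUnit (LinearMap.det (e : EuclideanSpace ℝ (Fin d) →ₗ[ℝ] EuclideanSpace ℝ (Fin d))) :=
    LinearEquiv.isUnit_det' e
  have he : (e : EuclideanSpace ℝ (Fin d) →ₗ[ℝ] EuclideanSpace ℝ (Fin d)) = simplexMapL v :=
    LinearMap.ext fun y => rfl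
  rw [he] at this
  exact this.ne_zero

lemma sup_bound (d p : ℕ) : ∃ C : ℝ, 0 < C ∧
    ∀ v : Fin (d+1) → EuclideanSpace ℝ (Fin d), AffineIndependent ℝ v →
    ∀ P : MvPolynomial (Fin d) ℝ, P.totalDegree ≤ p →
    ∀ x ∈ convexHull ℝ (Set.range v),
      (MvPolynomial.eval (fun i => x i) P)^2 * (volume (convexHull ℝ (Set.range v))).toReal
        ≤ C * ∫ x in convexHull ℝ (Set.range v), (MvPolynomial.eval (fun i => x i) P)^2 := by
  obtain ⟨C₀, hC₀, href⟩ := ref_bound d p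
  have hvolK : 0 < (volume (refS d)).toReal :=
    ENNReal.toReal_pos (ne_of_gt (refS_volume_pos d)) (ne_of_lt (refS_volume_lt_top d))
  refine ⟨C₀ * (volume (refS d)).toReal, by positivity, ?_⟩
  intro v hv P hP x hx
  set L := simplexMapL v with hL
  set A := simplexMap v with hA
  have hdet : LinearMap.det L ≠ 0 := simplexMapL_det_ne_zero v hv
  set g : Fin d → MvPolynomial (Fin d) ℝ :=
    fun i => MvPolynomial.C (v 0 i)
      + ∑ j, MvPolynomial.C ((v j.succ - v 0) i) * MvPolynomial.X j with hg
  have hgdeg : ∀ i, (g i).totalDegree ≤ 1 := by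
    intro i
    apply le_trans (MvPolynomial.totalDegree_add _ _)
    apply max_le
    · simp [MvPolynomial.totalDegree_C]
    · apply le_trans (MvPolynomial.totalDegree_finset_sum _ _)
      apply Finset.sup_le
      intro j _
      apply le_trans (MvPolynomial.totalDegree_mul _ _)
      rw [MvPolynomial.totalDegree_C, MvPolynomial.totalDegree_X]
  set Q := MvPolynomial.bind₁ g P with hQ
  have hQdeg : Q.totalDegree ≤ p := le_trans (totalDegree_bind₁_le g hgdeg P) hP
  have hQeval : ∀ y : EuclideanSpace ℝ (Fin d),
      MvPolynomial.eval (fun i => y i) Q = MvPolynomial.eval (fun i => (A y) i) P := by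
    intro y
    have h1 := MvPolynomial.aeval_bind₁ (fun i => y i) g P
    have h2 : (MvPolynomial.aeval (fun i => y i)) (MvPolynomial.bind₁ g P)
        = MvPolynomial.eval (fun i => y i) Q := rfl
    rw [h2] at h1
    rw [h1]
    have h3 : (fun i => (MvPolynomial.aeval (fun i' => y i')) (g i))
        = fun i => (A y) i := by
      funext i
      have h6 : (∑ j, y j • (v j.succ - v 0)) i = ∑ j, (y j • (v j.succ - v 0)) i :=
        map_sum (EuclideanSpace.proj (𝕜 := ℝ) i) (fun j => y j • (v j.succ - v 0)) Finset.univ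
      have h4 : (A y) i = v 0 i + ∑ j, y j * ((v j.succ - v 0) i) := by
        calc (A y) i = v 0 i + (∑ j, y j • (v j.succ - v 0)) i := rfl
          _ = v 0 i + ∑ j, (y j • (v j.succ - v 0)) i := by rw [h6]
          _ = v 0 i + ∑ j, y j * ((v j.succ - v 0) i) := rfl
      rw [h4, hg]
      simp only [map_add, map_sum, map_mul, MvPolynomial.aeval_C, MvPolynomial.aeval_X,
        Algebra.algebraMap_self_apply]
      congr 1
      exact Finset.sum_congr rfl fun j _ => by ring
    rw [h3]
    rfl
  set Lc := LinearMap.toContinuousLinearMap L with hLc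
  have hdetc : Lc.det = LinearMap.det L := by
    rw [ContinuousLinearMap.det, LinearMap.coe_toContinuousLinearMap]
  have hAinj : Set.InjOn A (refS d) := by
    intro a _ b _ hab
    have h1 : v 0 + L a = v 0 + L b := hab
    have h2 : L a = L b := by
      have := congrArg (fun z => z - v 0) h1
      simpa using this
    have hinj : Function.Injective L := by
      rw [← LinearMap.ker_eq_bot, LinearMap.ker_eq_bot']
      intro y hy
      have := Fintype.linearIndependent_iff.1 (vsub_linearIndependent v hv) (fun j => y j) hy
      ext i
      exact this i
    exact hinj h2
  have hderiv : ∀ y ∈ refS d, HasFDerivWithinAt (fun y' => A y') Lc (refS d) y := by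
    intro y _
    have h1 : HasFDerivAt (fun y' => v 0 + Lc y') Lc y :=
      (Lc.hasFDerivAt).const_add (v 0)
    exact h1.hasFDerivWithinAt
  have hT : convexHull ℝ (Set.range v) = A '' refS d := (simplexMap_image v).symm
  have hcov := MeasureTheory.integral_image_eq_integral_abs_det_fderiv_smul volume
    (refS_compact d).measurableSet hderiv hAinj
    (fun x => (MvPolynomial.eval (fun i => x i) P)^2)
  have hIT : (∫ x in convexHull ℝ (Set.range v), (MvPolynomial.eval (fun i => x i) P)^2)
      = |LinearMap.det L| * ∫ y in refS d, (MvPolynomial.eval (fun i => y i) Q)^2 := by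
    rw [hT, hcov, ← MeasureTheory.integral_const_mul]
    congr 1
    funext y'
    rw [smul_eq_mul, hdetc, hQeval y']
  have hvol : (volume (convexHull ℝ (Set.range v))).toReal
      = |LinearMap.det L| * (volume (refS d)).toReal := by
    rw [hT]
    have h1 : A '' refS d = (fun z => v 0 + z) '' (L '' refS d) := by
      rw [Set.image_image]
      rfl
    rw [h1]
    have h2 : (fun z => v 0 + z) '' (L '' refS d) = v 0 +ᵥ (L '' refS d) := by
      rw [← Set.image_vadd]
      rfl
    rw [h2, measure_vadd, MeasureTheory.Measure.addHaar_image_linearMap,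
      ENNReal.toReal_mul, ENNReal.toReal_ofReal (abs_nonneg _)]
  rw [hT] at hx
  obtain ⟨y, hy, rfl⟩ := hx
  have hkey := href Q hQdeg y hy
  have hQy : MvPolynomial.eval (fun i => (A y) i) P = MvPolynomial.eval (fun i => y i) Q :=
    (hQeval y).symm
  rw [hQy, hIT, hvol]
  calc (MvPolynomial.eval (fun i => y i) Q)^2 * (|LinearMap.det L| * (volume (refS d)).toReal)
      ≤ (C₀ * ∫ x in refS d, (MvPolynomial.eval (fun i => x i) Q)^2)
          * (|LinearMap.det L| * (volume (refS d)).toReal) := by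
        apply mul_le_mul_of_nonneg_right hkey
        positivity
    _ = C₀ * (volume (refS d)).toReal
        * (|LinearMap.det L| * ∫ x in refS d, (MvPolynomial.eval (fun i => x i) Q)^2) := by
        ring

lemma refS_hausdorff_lt_top (m : ℕ) : μH[(m:ℝ)] (refS m) < ⊤ := by
  set φ : (Fin m → ℝ) → EuclideanSpace ℝ (Fin m) := ⇑(WithLp.equiv 2 (Fin m → ℝ)).symm with hφ
  have hanti : AntilipschitzWith ((Fintype.card (Fin m) : NNReal) ^ ((1:ℝ≥0∞)/2).toReal)
      (WithLp.equiv 2 (Fin m → ℝ)) := PiLp.antilipschitzWith_ofLp 2 _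
  have hlip : LipschitzWith ((Fintype.card (Fin m) : NNReal) ^ ((1:ℝ≥0∞)/2).toReal) φ :=
    hanti.to_rightInverse (fun x => rfl)
  set S₀ : Set (Fin m → ℝ) := (WithLp.equiv 2 (Fin m → ℝ)) '' refS m with hS₀
  have hrefS : refS m = φ '' S₀ := by
    rw [hS₀, hφ, ← Set.image_comp]
    simp
  rw [hrefS]
  calc μH[(m:ℝ)] (φ '' S₀)
      ≤ ((Fintype.card (Fin m) : NNReal) ^ ((1:ℝ≥0∞)/2).toReal : NNReal) ^ (m:ℝ) * μH[(m:ℝ)] S₀ :=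
        hlip.hausdorffMeasure_image_le (by positivity) S₀
    _ < ⊤ := by
        apply ENNReal.mul_lt_top
        · exact ENNReal.rpow_lt_top_of_nonneg (by positivity) ENNReal.coe_ne_top
        · have hmeq : μH[(m:ℝ)] = (volume : Measure (Fin m → ℝ)) := by
            have := MeasureTheory.hausdorffMeasure_pi_real (ι := Fin m)
            simpa using this
          rw [hmeq]
          have hS₀c : IsCompact S₀ := by
            apply IsCompact.image (refS_compact m)
            exact (PiLp.lipschitzWith_ofLp 2 _).continuous
          exact hS₀c.measure_lt_top

lemma hull_hausdorff_lt_top {m : ℕ} (w : Fin (m+1) → EuclideanSpace ℝ (Fin (m+1))) :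
    μH[(m:ℝ)] (convexHull ℝ (Set.range w)) < ⊤ := by
  rw [← simplexMap_image w]
  set Lc := LinearMap.toContinuousLinearMap (simplexMapL w) with hLc
  have hlip : LipschitzWith (1 * ‖Lc‖₊) (fun y => simplexMap w y) := by
    have h1 : (fun y => simplexMap w y) = (fun z => w 0 + z) ∘ (fun y => Lc y) := rfl
    rw [h1]
    exact ((isometry_add_left (w 0)).lipschitz).comp Lc.lipschitz
  calc μH[(m:ℝ)] ((fun y => simplexMap w y) '' refS m)
      ≤ (1 * ‖Lc‖₊ : NNReal) ^ (m:ℝ) * μH[(m:ℝ)] (refS m) :=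
        hlip.hausdorffMeasure_image_le (by positivity) _
    _ < ⊤ := ENNReal.mul_lt_top
        (ENNReal.rpow_lt_top_of_nonneg (by positivity) ENNReal.coe_ne_top)
        (refS_hausdorff_lt_top m)

/-- Polynomial inverse trace inequality on a simplex: for a polynomial of
total degree ≤ p on a nondegenerate simplex `T = convexHull (range v)` with a
face `F` (the convex hull of all vertices but one),
`‖φ‖_{L²(F)} ≤ C √(|F|/|T|) ‖φ‖_{L²(T)}` with `C = C(d, p)`. -/
theorem stmt_1 (d p : ℕ) :
    ∃ C : ℝ, 0 < C ∧
      ∀ (v : Fin (d + 1) → EuclideanSpace ℝ (Fin d)), AffineIndependent ℝ v →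
      ∀ (k : Fin (d + 1)) (P : MvPolynomial (Fin d) ℝ), P.totalDegree ≤ p →
      ∀ T F : Set (EuclideanSpace ℝ (Fin d)),
        T = convexHull ℝ (Set.range v) →
        F = convexHull ℝ (v '' {i | i ≠ k}) →
        (∫ x in F, (MvPolynomial.eval (fun i => x i) P) ^ 2 ∂(μH[(d:ℝ) - 1])) ^ ((1:ℝ)/2) ≤
          C * Real.sqrt ((μH[(d:ℝ) - 1] F).toReal / (volume T).toReal) *
            (∫ x in T, (MvPolynomial.eval (fun i => x i) P) ^ 2) ^ ((1:ℝ)/2) := by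
  obtain ⟨C₄, hC₄, hsup⟩ := sup_bound d p
  refine ⟨max 1 (Real.sqrt C₄), lt_of_lt_of_le one_pos (le_max_left _ _), ?_⟩
  intro v hv k P hP T F hT hF
  subst hT hF
  rcases Nat.eq_zero_or_pos d with hd | hd
  · subst hd
    have hFe : {i : Fin 1 | i ≠ k} = ∅ := by
      ext i
      simp [Subsingleton.elim i k]
    rw [hFe, Set.image_empty, convexHull_empty]
    rw [MeasureTheory.setIntegral_empty, Real.zero_rpow (by norm_num)]
    have h1 : (0:ℝ) ≤ ∫ x in convexHull ℝ (Set.range v),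
        (MvPolynomial.eval (fun i => x i) P) ^ 2 :=
      MeasureTheory.integral_nonneg fun x => sq_nonneg _
    have h2 : (0:ℝ) ≤ max 1 (Real.sqrt C₄) := le_trans zero_le_one (le_max_left _ _)
    positivity
  · obtain ⟨m, rfl⟩ : ∃ m, d = m + 1 := ⟨d - 1, (Nat.succ_pred_eq_of_pos hd).symm⟩
    set T := convexHull ℝ (Set.range v) with hT
    set F := convexHull ℝ (v '' {i | i ≠ k}) with hF
    have hcast : ((m + 1 : ℕ) : ℝ) - 1 = (m : ℝ) := by push_cast; ring
    rw [hcast]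
    -- F as hull of a range
    have hFw : v '' {i | i ≠ k} = Set.range (v ∘ k.succAbove) := by
      rw [Set.range_comp, Fin.range_succAbove]
      rfl
    have hμF : μH[(m:ℝ)] F < ⊤ := by
      rw [hF, hFw]
      exact hull_hausdorff_lt_top _
    -- T volume positive
    have hTint : (interior T).Nonempty := by
      rw [hT, (convex_convexHull ℝ _).interior_nonempty_iff_affineSpan_eq_top,
        affineSpan_convexHull,
        hv.affineSpan_eq_top_iff_card_eq_finrank_add_one]
      simp [finrank_euclideanSpace_fin]
    have hTpos : 0 < volume T :=
      lt_of_lt_of_le (IsOpen.measure_pos volume isOpen_interior hTint)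
        (measure_mono interior_subset)
    have hTlt : volume T < ⊤ := ((Set.finite_range v).isCompact_convexHull ℝ).measure_lt_top
    have hTr : 0 < (volume T).toReal := ENNReal.toReal_pos hTpos.ne' hTlt.ne
    have hFsubT : F ⊆ T := convexHull_mono (Set.image_subset_range v _)
    set f : EuclideanSpace ℝ (Fin (m+1)) → ℝ :=
      fun x => (MvPolynomial.eval (fun i => x i) P) ^ 2 with hf
    set IT : ℝ := ∫ x in T, f x with hIT
    set IF : ℝ := ∫ x in F, f x ∂(μH[(m:ℝ)]) with hIF
    have hITnn : 0 ≤ IT := MeasureTheory.integral_nonneg fun x => sq_nonneg _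
    have hIFnn : 0 ≤ IF := MeasureTheory.integral_nonneg fun x => sq_nonneg _
    set c : ℝ := C₄ * IT / (volume T).toReal with hc
    have hcnn : 0 ≤ c := by positivity
    have hpt : ∀ x ∈ F, ‖f x‖ ≤ c := by
      intro x hx
      rw [hf, Real.norm_eq_abs, abs_of_nonneg (sq_nonneg _)]
      rw [hc, le_div_iff₀ hTr]
      exact hsup v hv P hP x (hFsubT hx)
    have hIFle : IF ≤ c * (μH[(m:ℝ)] F).toReal := by
      have := norm_setIntegral_le_of_norm_le_const hμF hpt
      calc IF ≤ ‖IF‖ := le_abs_self IF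
        _ ≤ c * (μH[(m:ℝ)] F).toReal := this
    -- now take square roots
    rw [← Real.sqrt_eq_rpow, ← Real.sqrt_eq_rpow]
    have hstep : Real.sqrt IF ≤ Real.sqrt (C₄ * ((μH[(m:ℝ)] F).toReal / (volume T).toReal) * IT) := by
      apply Real.sqrt_le_sqrt
      calc IF ≤ c * (μH[(m:ℝ)] F).toReal := hIFle
        _ = C₄ * ((μH[(m:ℝ)] F).toReal / (volume T).toReal) * IT := by
            rw [hc]; field_simp
    apply le_trans hstep
    rw [Real.sqrt_mul (by positivity), Real.sqrt_mul (le_of_lt hC₄)]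
    have h3 : 0 ≤ Real.sqrt ((μH[(m:ℝ)] F).toReal / (volume T).toReal) := Real.sqrt_nonneg _
    have h4 : 0 ≤ Real.sqrt IT := Real.sqrt_nonneg _
    calc Real.sqrt C₄ * Real.sqrt ((μH[(m:ℝ)] F).toReal / (volume T).toReal) * Real.sqrt IT
        ≤ max 1 (Real.sqrt C₄) * Real.sqrt ((μH[(m:ℝ)] F).toReal / (volume T).toReal)
            * Real.sqrt IT := by
          apply mul_le_mul_of_nonneg_right _ h4
          exact mul_le_mul_of_nonneg_right (le_max_right _ _) h3
      _ = _ := rfl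
end

section
/- Let T be a shape-regular simplex of diameter h_T in ℝ^d with vertices p_i, partitioned into subregions T_i associated to its vertices, and let v be affine on T. Define Π v as the piecewise constant function equal to v(p_i) on T_i. Then ‖v − Π v‖_{L²(T)} ≤ C h_T ‖∇v‖_{L²(T)} with C depending only on shape regularity. -/
open MeasureTheory
open scoped RealInnerProductSpace

/-! The bound is pointwise: on `Tset i` the error is `⟪a, x - v i⟫` with `x` and `v i` both in `T`,
so it is at most `diam T * ‖a‖`; squaring and integrating over `T` gives the estimate with
`C = 1`. -/

theorem rpow_setIntegral_sq_le_of_abs_le {α : Type*} [MeasurableSpace α] {μ : Measure α}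
    {s : Set α} (hs : MeasurableSet s) (hμs : μ s ≠ ⊤) {g : α → ℝ} {K c : ℝ}
    (hK : 0 ≤ K) (hg : ∀ x ∈ s, |g x| ≤ K * c) :
    (∫ x in s, g x ^ 2 ∂μ) ^ ((1 : ℝ) / 2) ≤ K * (∫ _ in s, c ^ 2 ∂μ) ^ ((1 : ℝ) / 2) := by
  have : IsFiniteMeasure (μ.restrict s) := isFiniteMeasure_restrict.mpr hμs
  have hsq_le : ∫ x in s, g x ^ 2 ∂μ ≤ K ^ 2 * ∫ _ in s, c ^ 2 ∂μ := by
    rw [← integral_const_mul]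
    refine integral_mono_of_nonneg (ae_of_all _ fun x => sq_nonneg _)
      (integrable_const _) (ae_restrict_of_forall_mem hs fun x hx => ?_)
    calc g x ^ 2 = |g x| ^ 2 := (sq_abs _).symm
      _ ≤ (K * c) ^ 2 := pow_le_pow_left₀ (abs_nonneg _) (hg x hx) 2
      _ = K ^ 2 * c ^ 2 := mul_pow K c 2
  have hc_int : 0 ≤ ∫ _ in s, c ^ 2 ∂μ := integral_nonneg fun x => sq_nonneg c
  calc (∫ x in s, g x ^ 2 ∂μ) ^ ((1 : ℝ) / 2)
      ≤ (K ^ 2 * ∫ _ in s, c ^ 2 ∂μ) ^ ((1 : ℝ) / 2) :=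
        Real.rpow_le_rpow (integral_nonneg fun x => sq_nonneg _) hsq_le (by norm_num)
    _ = K * (∫ _ in s, c ^ 2 ∂μ) ^ ((1 : ℝ) / 2) := by
        rw [Real.mul_rpow (sq_nonneg K) hc_int, ← Real.sqrt_eq_rpow, Real.sqrt_sq hK]

theorem abs_inner_sub_inner_le_diam_mul_norm {E : Type*} [NormedAddCommGroup E]
    [InnerProductSpace ℝ E] {s : Set E} (hs : Bornology.IsBounded s) (a : E) {x y : E}
    (hx : x ∈ s) (hy : y ∈ s) : |⟪a, x⟫ - ⟪a, y⟫| ≤ Metric.diam s * ‖a‖ := by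
  rw [← inner_sub_right, mul_comm]
  calc |⟪a, x - y⟫| ≤ ‖a‖ * ‖x - y‖ := abs_real_inner_le_norm a _
    _ ≤ ‖a‖ * Metric.diam s := by
        rw [← dist_eq_norm]
        exact mul_le_mul_of_nonneg_left (Metric.dist_le_diam_of_mem hs hx hy) (norm_nonneg a)

theorem stmt_9_general (d : ℕ) (ρ : ℝ) :
    ∃ C : ℝ, 0 < C ∧
      ∀ (v : Fin (d + 1) → EuclideanSpace ℝ (Fin d)), AffineIndependent ℝ v →
      ∀ T : Set (EuclideanSpace ℝ (Fin d)), T = convexHull ℝ (Set.range v) →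
        (∃ z, Metric.ball z (ρ * Metric.diam T) ⊆ T) →
      ∀ Tset : Fin (d + 1) → Set (EuclideanSpace ℝ (Fin d)),
        (∀ i, Tset i ⊆ T) → (∀ i, MeasurableSet (Tset i)) →
        Pairwise (Function.onFun Disjoint Tset) → (⋃ i, Tset i) = T →
      ∀ (a : EuclideanSpace ℝ (Fin d)) (b : ℝ) (f Pf : EuclideanSpace ℝ (Fin d) → ℝ),
        (∀ x, f x = ⟪a, x⟫ + b) →
        (∀ i, ∀ x ∈ Tset i, Pf x = f (v i)) →
        (∫ x in T, (f x - Pf x) ^ 2) ^ ((1:ℝ)/2) ≤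
          C * Metric.diam T * (∫ x in T, ‖a‖ ^ 2) ^ ((1:ℝ)/2) := by
  refine ⟨1, one_pos, ?_⟩
  intro v _ T hT _ Tset _ _ _ hunion a b f Pf hf hPf
  have hT_compact : IsCompact T := hT ▸ (Set.finite_range v).isCompact_convexHull ℝ
  rw [one_mul]
  refine rpow_setIntegral_sq_le_of_abs_le hT_compact.measurableSet
    hT_compact.measure_lt_top.ne Metric.diam_nonneg fun x hx => ?_
  obtain ⟨i, hxi⟩ := Set.mem_iUnion.mp (hunion ▸ hx)
  have hvi : v i ∈ T := hT ▸ subset_convexHull ℝ _ ⟨i, rfl⟩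
  rw [hPf i x hxi, hf, hf, add_sub_add_right_eq_sub]
  exact abs_inner_sub_inner_le_diam_mul_norm hT_compact.isBounded a hx hvi

/-- L² lumping error estimate: for an affine `f` on a shape-regular simplex
`T` of diameter `h_T`, partitioned into the vertex regions `Tset i`, the
lumped interpolant `Pf` (taking the nodal value `f (v i)` on `Tset i`)
satisfies `‖f − Pf‖_{L²(T)} ≤ C h_T ‖∇f‖_{L²(T)}`. -/
theorem stmt_9 (d : ℕ) (ρ : ℝ) (hρ : 0 < ρ) :
    ∃ C : ℝ, 0 < C ∧
      ∀ (v : Fin (d + 1) → EuclideanSpace ℝ (Fin d)), AffineIndependent ℝ v →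
      ∀ T : Set (EuclideanSpace ℝ (Fin d)), T = convexHull ℝ (Set.range v) →
        (∃ z, Metric.ball z (ρ * Metric.diam T) ⊆ T) →
      ∀ Tset : Fin (d + 1) → Set (EuclideanSpace ℝ (Fin d)),
        (∀ i, Tset i ⊆ T) → (∀ i, MeasurableSet (Tset i)) →
        Pairwise (Function.onFun Disjoint Tset) → (⋃ i, Tset i) = T →
      ∀ (a : EuclideanSpace ℝ (Fin d)) (b : ℝ) (f Pf : EuclideanSpace ℝ (Fin d) → ℝ),
        (∀ x, f x = ⟪a, x⟫ + b) →
        (∀ i, ∀ x ∈ Tset i, Pf x = f (v i)) →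
        (∫ x in T, (f x - Pf x) ^ 2) ^ ((1:ℝ)/2) ≤
          C * Metric.diam T * (∫ x in T, ‖a‖ ^ 2) ^ ((1:ℝ)/2) :=
  stmt_9_general d ρ
end
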